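/- Under the parametrization b = -a - j + e₁t, d = -c - j + e₂t of the Wilson recurrence coefficient A_n(t) = (n - N + (e₁+e₂)t)(n - j + e₁t)(n + a + c)(n + a - c - j + e₂t) / ((2n - N + (e₁+e₂)t)(2n - N + 1 + (e₁+e₂)t)), where N = 2j+1, the following limits hold as t → 0 (along t ≠ 0): if n ∈ {0,…,N} with n ≠ j, then A_n(t) tends to (n - N)(n + a + c)(n + a - c - j)/(2(2n - N)); and A_j(t) tends to (e₁/(e₁+e₂))·(j+1)(j + a + c)(a - c). -/
import Mathlib


open Filter Topology

noncomputable section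

/-- The Wilson recurrence coefficient `Aₙ` under the parametrization
`b = -a - j + e₁ t`, `d = -c - j + e₂ t`, with `N = 2j+1`. -/
def wilsonA (j : ℕ) (a c e₁ e₂ : ℝ) (n : ℕ) (t : ℝ) : ℝ :=
  (((n : ℝ) - (2 * j + 1) + (e₁ + e₂) * t) * ((n : ℝ) - j + e₁ * t) *
      ((n : ℝ) + a + c) * ((n : ℝ) + a - c - j + e₂ * t)) /
    ((2 * (n : ℝ) - (2 * j + 1) + (e₁ + e₂) * t) *
      (2 * (n : ℝ) - (2 * j + 1) + 1 + (e₁ + e₂) * t))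

theorem paraRacah_truncation_limit_A (j : ℕ) (a c e₁ e₂ : ℝ) (h : e₁ + e₂ ≠ 0) :
    (∀ n : ℕ, n ≤ 2 * j + 1 → n ≠ j →
      Tendsto (wilsonA j a c e₁ e₂ n) (𝓝[≠] (0 : ℝ))
        (𝓝 (((n : ℝ) - (2 * j + 1)) * ((n : ℝ) + a + c) * ((n : ℝ) + a - c - j) /
          (2 * (2 * (n : ℝ) - (2 * j + 1)))))) ∧
    Tendsto (wilsonA j a c e₁ e₂ j) (𝓝[≠] (0 : ℝ))
      (𝓝 (e₁ / (e₁ + e₂) * ((j : ℝ) + 1) * ((j : ℝ) + a + c) * (a - c))) := by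
  constructor
  · intro n hn hne
    have hd1 : (2 * (n : ℝ) - (2 * j + 1)) ≠ 0 := by
      intro heq
      have h2 : (2 * (n : ℝ)) = 2 * (j : ℝ) + 1 := by linarith
      have h3 : (2 * n : ℤ) = 2 * j + 1 := by exact_mod_cast h2
      omega
    have hj : ((n : ℝ) - j) ≠ 0 := by
      intro heq
      have h2 : (n : ℝ) = (j : ℝ) := by linarith
      exact hne (by exact_mod_cast h2)
    have hd2 : (2 * (n : ℝ) - (2 * j + 1) + 1) ≠ 0 := by
      intro heq
      apply hj
      linarith
    have hcont : ContinuousAt (wilsonA j a c e₁ e₂ n) 0 := by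
      unfold wilsonA
      apply ContinuousAt.div (by fun_prop) (by fun_prop)
      simp only [mul_zero, add_zero]
      exact mul_ne_zero hd1 hd2
    have htt : Tendsto (wilsonA j a c e₁ e₂ n) (𝓝[≠] (0:ℝ)) (𝓝 (wilsonA j a c e₁ e₂ n 0)) :=
      hcont.tendsto.mono_left nhdsWithin_le_nhds
    convert htt using 2
    unfold wilsonA
    simp only [mul_zero, add_zero]
    rw [div_eq_div_iff (mul_ne_zero two_ne_zero hd1) (mul_ne_zero hd1 hd2)]
    have h2 : 2 * (n : ℝ) - (2 * j + 1) + 1 = 2 * ((n : ℝ) - j) := by ring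
    rw [h2]; ring
  · have heq : ∀ᶠ t in 𝓝[≠] (0 : ℝ), wilsonA j a c e₁ e₂ j t =
        e₁ / (e₁ + e₂) *
          ((((j : ℝ) - (2 * j + 1) + (e₁ + e₂) * t) * ((j : ℝ) + a + c) * (a - c + e₂ * t)) /
            (2 * (j : ℝ) - (2 * j + 1) + (e₁ + e₂) * t)) := by
      filter_upwards [self_mem_nhdsWithin] with t ht
      have ht : t ≠ 0 := ht
      unfold wilsonA
      have hnum : ((j : ℝ) - j + e₁ * t) = e₁ * t := by ring
      have hden : (2 * (j : ℝ) - (2 * j + 1) + 1 + (e₁ + e₂) * t) = (e₁ + e₂) * t := by ring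
      have hq : ((j : ℝ) + a - c - j + e₂ * t) = a - c + e₂ * t := by ring
      have hd0 : (2 * (j : ℝ) - (2 * j + 1) + (e₁ + e₂) * t) = -1 + (e₁ + e₂) * t := by ring
      rw [hnum, hden, hq, hd0]
      by_cases hX : (-1 + (e₁ + e₂) * t : ℝ) = 0
      · simp [hX]
      · field_simp [hX, ht, h]
    rw [Filter.tendsto_congr' heq]
    have hX0 : (2 * (j : ℝ) - (2 * j + 1) + (e₁ + e₂) * 0) ≠ 0 := by
      simp only [mul_zero, add_zero]
      intro heq'
      have h3 : (2 * (j : ℝ)) = 2 * (j : ℝ) + 1 := by linarith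
      linarith
    have hcont : ContinuousAt (fun t : ℝ => e₁ / (e₁ + e₂) *
          ((((j : ℝ) - (2 * j + 1) + (e₁ + e₂) * t) * ((j : ℝ) + a + c) * (a - c + e₂ * t)) /
            (2 * (j : ℝ) - (2 * j + 1) + (e₁ + e₂) * t))) 0 := by
      exact ContinuousAt.mul continuousAt_const
        (ContinuousAt.div (by fun_prop) (by fun_prop) hX0)
    have htt : Tendsto _ (𝓝[≠] (0:ℝ)) _ := hcont.tendsto.mono_left nhdsWithin_le_nhds
    convert htt using 2
    simp only [mul_zero, add_zero]
    have hden : (2 * (j : ℝ) - (2 * j + 1)) = -1 := by ring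
    rw [hden]
    rw [div_neg, div_one]
    ring
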